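/- Let 0 < ε₀ < c. Then the map H: f ↦ (f + f̄)/2 (i.e. f ↦ Re f) maps 𝓑^ℂ([ε₀, c]) into 𝓑([−c, c]), is continuous, injective, and satisfies H ∘ σ = σ ∘ H; consequently H is an equivariant topological embedding of the shift (𝓑^ℂ([ε₀, c]), σ) into the shift (𝓑([−c, c]), σ). (Injectivity: if f, g ∈ 𝓑^ℂ([ε₀, c]) satisfy f + f̄ = g + ḡ, then f − g = conj(g − f), and since supp 𝓕(f̄) = −supp 𝓕(f), the Fourier transform of f − g is supported in [ε₀, c] ∩ [−c, −ε₀] = ∅, so f = g.) -/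

import Mathlib

/-!
Since `Re f = (f + f̄) / 2` and conjugation reflects the Fourier support (`𝓕(f̄)` pairs with
`g` as `𝓕 f` pairs with `x ↦ conj (g (-x))`), `Re f` is band-limited in `I ∪ -I` whenever `f`
is band-limited in `I`. If `Re f = Re g`, then `u = f - g` is purely imaginary, so `u = -ū` is
band-limited both in `I` and in `-I`. When `I` is compact and disjoint from `-I`, a smooth
cutoff equal to `1` near `I` and vanishing near `-I` splits every test function into a piece
supported away from `-I` and one vanishing near `I`; hence `u` pairs trivially with every
Schwartz function, and being continuous, `u = 0`.
-/

open MeasureTheory Set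
open scoped ENNReal NNReal

noncomputable section

/-- A bounded continuous function `f : ℝ → ℂ` is band-limited in `I` if its distributional
Fourier transform is supported in `I`, i.e. `⟨𝓕 f, g⟩ = ⟨f, 𝓕 g⟩ = 0` for every Schwartz
function `g` whose support is disjoint from `I`. -/
def BandLimitedIn (I : Set ℝ) (f : ℝ → ℂ) : Prop :=
  ∀ g : SchwartzMap ℝ ℂ, Disjoint (tsupport ⇑g) I →
    ∫ t : ℝ, f t * FourierTransform.fourier (⇑g : ℝ → ℂ) t = 0

/-- The Bernstein space `𝓑^ℂ(I)`. -/
def BernsteinC (I : Set ℝ) : Set C(ℝ, ℂ) :=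
  {f | (∀ t : ℝ, ‖f t‖ ≤ 1) ∧ BandLimitedIn I ⇑f}

/-- The real Bernstein space `𝓑(I)`. -/
def BernsteinR (I : Set ℝ) : Set C(ℝ, ℝ) :=
  {f | (∀ t : ℝ, |f t| ≤ 1) ∧ BandLimitedIn I (fun t => (f t : ℂ))}

/-- The shift `σ : g ↦ g(· + 1)`. -/
def shiftC : C(ℝ, ℂ) → C(ℝ, ℂ) := fun f => f.comp ⟨fun t => t + 1, by continuity⟩

def shiftR : C(ℝ, ℝ) → C(ℝ, ℝ) := fun f => f.comp ⟨fun t => t + 1, by continuity⟩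

/-- The metric `D(f,g) = Σ 2^{-n} ‖f-g‖_{L^∞([-n,n])}`. -/
def Dc (f g : C(ℝ, ℂ)) : ℝ :=
  ∑' n : ℕ, (1 / 2 : ℝ) ^ (n + 1) * ⨆ t : Icc (-(n + 1 : ℝ)) (n + 1 : ℝ), ‖f t.1 - g t.1‖

def Dr (f g : C(ℝ, ℝ)) : ℝ :=
  ∑' n : ℕ, (1 / 2 : ℝ) ^ (n + 1) * ⨆ t : Icc (-(n + 1 : ℝ)) (n + 1 : ℝ), |f t.1 - g t.1|

/-- Lebesgue covering dimension is at most `n`: every open cover admits an open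
refinement that still covers, of order at most `n + 1`. -/
def HasCovDimLE (X : Type*) [TopologicalSpace X] (n : ℕ) : Prop :=
  ∀ 𝒰 : Set (Set X), (∀ U ∈ 𝒰, IsOpen U) → ⋃₀ 𝒰 = Set.univ →
    ∃ 𝒱 : Set (Set X), (∀ V ∈ 𝒱, IsOpen V) ∧ ⋃₀ 𝒱 = Set.univ ∧
      (∀ V ∈ 𝒱, ∃ U ∈ 𝒰, V ⊆ U) ∧
      ∀ x : X, {V | V ∈ 𝒱 ∧ x ∈ V}.encard ≤ (n : ℕ∞) + 1

/-- Lebesgue covering dimension, valued in `ℕ∞`. -/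
def covDim (X : Type*) [TopologicalSpace X] : ℕ∞ :=
  ⨅ n ∈ {n : ℕ | HasCovDimLE X n}, (n : ℕ∞)

/-- `Widim_ε(X, d)`: the minimal covering dimension of a compact metrizable space `P`
admitting a continuous `ε`-embedding `f : X → P` with respect to `d`. -/
def Widim (X : Type u) [TopologicalSpace X] (d : X → X → ℝ) (ε : ℝ) : ℕ∞ :=
  sInf {k : ℕ∞ | ∃ (P : Type u) (tP : TopologicalSpace P),
    @CompactSpace P tP ∧ @TopologicalSpace.MetrizableSpace P tP ∧
    ∃ f : X → P, @Continuous X P _ tP f ∧ (∀ x y : X, f x = f y → d x y < ε) ∧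
      @covDim P tP = k}

/-- The dynamical metric `d_n(x,y) = max_{0 ≤ i ≤ n-1} d(T^i x, T^i y)`. -/
def dynDist {X : Type*} (T : X → X) (d : X → X → ℝ) (n : ℕ) (x y : X) : ℝ :=
  ⨆ i : Fin n, d (T^[(i : ℕ)] x) (T^[(i : ℕ)] y)

/-- Mean dimension `mdim(X,T) = lim_{ε→0} lim_{n→∞} Widim_ε(X, d_n)/n`; since
`Widim_ε(X, d_n)` is subadditive in `n` and monotone in `ε`, the iterated limit equals
`sup_{ε>0} inf_{n≥1} Widim_ε(X, d_n)/n`. -/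
def mdim {X : Type u} [TopologicalSpace X] (T : X → X) (d : X → X → ℝ) : ℝ≥0∞ :=
  ⨆ ε : {ε : ℝ // 0 < ε}, ⨅ n : ℕ+, (Widim X (dynDist T d n) ε.1 : ℝ≥0∞) / ((n : ℕ) : ℝ≥0∞)

/-- A system `(X, T)` is minimal if `X` has no nonempty proper closed `T`-invariant subset. -/
def IsMinimalSystem {X : Type*} [TopologicalSpace X] (T : X → X) : Prop :=
  ∀ Z : Set X, IsClosed Z → Z.Nonempty → T '' Z = Z → Z = Set.univ


/-- The map `H(f) = (f + conj f)/2 = Re f`, from complex to real continuous functions. -/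
def Hre : C(ℝ, ℂ) → C(ℝ, ℝ) :=
  fun f => ⟨fun t => (f t).re, Complex.continuous_re.comp f.continuous⟩

open Complex Filter Topology
open scoped ComplexConjugate ContDiff FourierTransform SchwartzMap Manifold

section
variable {V : Type*} [NormedAddCommGroup V] [InnerProductSpace ℝ V]

theorem Real.fourier_conj_comp_neg [MeasurableSpace V] [BorelSpace V] [FiniteDimensional ℝ V]
    (f : V → ℂ) (w : V) : 𝓕 (fun x => conj (f (-x))) w = conj (𝓕 f w) := by
  rw [Real.fourier_eq', Real.fourier_eq', ← integral_conj, ← integral_neg_eq_self]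
  congr 1 with v
  simp only [smul_eq_mul, map_mul, ← Complex.exp_conj, neg_neg, inner_neg_left,
    Complex.conj_ofReal, Complex.conj_I]
  push_cast
  ring_nf

namespace SchwartzMap

def conjNeg (g : 𝓢(V, ℂ)) : 𝓢(V, ℂ) :=
  postcompCLM (𝕜 := ℝ) conjCLE.toContinuousLinearMap
    (compCLMOfContinuousLinearEquiv ℝ (.neg ℝ) g)

theorem fourier_conjNeg [MeasurableSpace V] [BorelSpace V] [FiniteDimensional ℝ V]
    (g : 𝓢(V, ℂ)) (w : V) : 𝓕 (⇑(conjNeg g)) w = conj (𝓕 (⇑g) w) :=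
  Real.fourier_conj_comp_neg g w

theorem tsupport_conjNeg_subset (g : 𝓢(V, ℂ)) : tsupport (conjNeg g) ⊆ -tsupport g :=
  (tsupport_comp_subset (map_zero conj) (g ∘ Neg.neg)).trans
    (tsupport_comp_eq_preimage g (Homeomorph.neg V)).subset

end SchwartzMap
end

theorem exists_contDiff_hasCompactSupport_eventually_one {E : Type*} [NormedAddCommGroup E]
    [NormedSpace ℝ E] [FiniteDimensional ℝ E] {K U : Set E} (hK : IsCompact K) (hU : IsOpen U)
    (hKU : K ⊆ U) :
    ∃ φ : E → ℝ, ContDiff ℝ ∞ φ ∧ HasCompactSupport φ ∧ tsupport φ ⊆ U ∧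
      ∀ᶠ x in 𝓝ˢ K, φ x = 1 := by
  obtain ⟨δ, hδ, hδU⟩ := hK.exists_cthickening_subset_open hU hKU
  obtain ⟨φ, hφ₀, hφ₁, -⟩ := exists_contMDiffMap_zero_one_nhds_of_isClosed 𝓘(ℝ, E) (n := ⊤)
    (Metric.isOpen_thickening (δ := δ) (E := K)).isClosed_compl hK.isClosed
    (disjoint_compl_left_iff_subset.mpr (Metric.self_subset_thickening hδ K))
  have hsupp : tsupport φ ⊆ Metric.cthickening δ K :=
    closure_minimal (fun x hx => Metric.thickening_subset_cthickening δ K <| by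
      by_contra h; exact hx (hφ₀.self_of_nhdsSet x h))
      Metric.isClosed_cthickening
  exact ⟨φ, contMDiff_iff_contDiff.mp φ.contMDiff,
    (hK.cthickening (r := δ)).of_isClosed_subset (isClosed_tsupport _) hsupp,
    hsupp.trans hδU, hφ₁⟩

theorem integrable_mul_fourier {f : ℝ → ℂ} (hf : MemLp f ∞) (g : 𝓢(ℝ, ℂ)) :
    Integrable fun t => f t * 𝓕 (⇑g) t := by
  simpa [SchwartzMap.fourier_coe] using (𝓕 g).integrable.mul_of_top_right hf

namespace BandLimitedIn

variable {I J : Set ℝ} {f g : ℝ → ℂ}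

theorem mono (hf : BandLimitedIn I f) (hIJ : I ⊆ J) : BandLimitedIn J f :=
  fun ψ hψ => hf ψ (hψ.mono_right hIJ)

theorem const_mul (hf : BandLimitedIn I f) (a : ℂ) : BandLimitedIn I fun t => a * f t := by
  intro ψ hψ
  simp_rw [mul_assoc, integral_const_mul, hf ψ hψ, mul_zero]

theorem add (hf : BandLimitedIn I f) (hg : BandLimitedIn I g) (hf' : MemLp f ∞)
    (hg' : MemLp g ∞) : BandLimitedIn I fun t => f t + g t := by
  intro ψ hψ
  simp_rw [add_mul]
  rw [integral_add (integrable_mul_fourier hf' ψ) (integrable_mul_fourier hg' ψ), hf ψ hψ,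
    hg ψ hψ, add_zero]

theorem star (hf : BandLimitedIn I f) : BandLimitedIn (-I) fun t => conj (f t) := by
  intro ψ hψ
  have hneg : Disjoint (-tsupport ψ) I := by simpa using hψ.preimage Neg.neg
  have hdisj : Disjoint (tsupport ψ.conjNeg) I := hneg.mono_left ψ.tsupport_conjNeg_subset
  calc ∫ t, conj (f t) * 𝓕 (⇑ψ) t = conj (∫ t, f t * 𝓕 (⇑ψ.conjNeg) t) := by
        simp_rw [← integral_conj, map_mul, ψ.fourier_conjNeg, conj_conj]
    _ = 0 := by rw [hf _ hdisj, map_zero]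

theorem re (hf : BandLimitedIn I f) (hf' : MemLp f ∞) :
    BandLimitedIn (I ∪ -I) fun t => ((f t).re : ℂ) := by
  have hsum := (hf.mono subset_union_left).add (hf.star.mono subset_union_right) hf' hf'.star
  simpa only [re_eq_add_conj, div_eq_inv_mul] using hsum.const_mul 2⁻¹

theorem empty_of_disjoint {K C : Set ℝ} (hK : IsCompact K) (hC : IsClosed C)
    (hKC : Disjoint K C) (hfK : BandLimitedIn K f) (hfC : BandLimitedIn C f) (hf : MemLp f ∞) :
    BandLimitedIn ∅ f := by
  intro ψ _
  obtain ⟨φ, hφ, hφc, hφC, hφK⟩ := exists_contDiff_hasCompactSupport_eventually_one hK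
    hC.isOpen_compl hKC.subset_compl_right
  let ψ₁ : 𝓢(ℝ, ℂ) := (hφc.smul_right (f' := ψ)).toSchwartzMap (hφ.smul (ψ.smooth ⊤))
  let ψ₂ : 𝓢(ℝ, ℂ) := ψ - ψ₁
  have h₁ : Disjoint (tsupport ψ₁) C :=
    disjoint_compl_left.mono_left ((tsupport_smul_subset_left φ ψ).trans hφC)
  have h₂ : Disjoint (tsupport ψ₂) K := by
    refine Set.disjoint_right.mpr fun x hx => notMem_tsupport_iff_eventuallyEq.mpr ?_
    filter_upwards [hφK.filter_mono (nhds_le_nhdsSet hx)] with y hy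
    simp [ψ₂, ψ₁, hy]
  have hsplit : 𝓕 ψ = 𝓕 ψ₁ + 𝓕 ψ₂ := by rw [← FourierTransform.fourier_add, add_sub_cancel]
  simp_rw [← SchwartzMap.fourier_coe, hsplit, add_apply, mul_add, SchwartzMap.fourier_coe]
  rw [integral_add (integrable_mul_fourier hf ψ₁) (integrable_mul_fourier hf ψ₂), hfC ψ₁ h₁,
    hfK ψ₂ h₂, add_zero]

theorem eq_zero_of_empty (hf : BandLimitedIn ∅ f) (hc : Continuous f) : f = 0 := by
  have hψ : ∀ ψ : 𝓢(ℝ, ℂ), ∫ t, f t * ψ t = 0 := fun ψ => by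
    simpa [← SchwartzMap.fourier_coe] using hf (𝓕⁻ ψ) (Set.disjoint_empty _)
  have hae : ∀ᵐ t, f t = 0 := by
    refine ae_eq_zero_of_integral_contDiff_smul_eq_zero hc.locallyIntegrable fun ρ hρ hρc => ?_
    have := hψ <| (hρc.comp_left (g := ofRealCLM) (map_zero _)).toSchwartzMap
      (ofRealCLM.contDiff.comp hρ)
    simpa [Complex.real_smul, mul_comm] using this
  exact (hc.ae_eq_iff_eq volume continuous_const).mp hae

end BandLimitedIn

theorem memLp_top_of_mem_bernsteinC {I : Set ℝ} {f : C(ℝ, ℂ)} (hf : f ∈ BernsteinC I) :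
    MemLp f ∞ :=
  memLp_top_of_bound f.continuous.aestronglyMeasurable 1 (.of_forall hf.1)

theorem continuous_Hre : Continuous Hre :=
  ContinuousMap.continuous_postcomp ⟨re, continuous_re⟩

theorem mapsTo_Hre (I : Set ℝ) : MapsTo Hre (BernsteinC I) (BernsteinR (I ∪ -I)) :=
  fun _ hf => ⟨fun t => (abs_re_le_norm _).trans (hf.1 t),
    hf.2.re (memLp_top_of_mem_bernsteinC hf)⟩

theorem injOn_Hre {I : Set ℝ} (hI : IsCompact I) (hdisj : Disjoint I (-I)) :
    InjOn Hre (BernsteinC I) := by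
  intro f hf g hg hfg
  have hf' := memLp_top_of_mem_bernsteinC hf
  have hg' := memLp_top_of_mem_bernsteinC hg
  set u : ℝ → ℂ := fun t => f t - g t
  have hu : BandLimitedIn I u := by
    simpa [u, ← sub_eq_add_neg] using hf.2.add (hg.2.const_mul (-1)) hf' (hg'.const_mul (-1))
  have hu_conj : ∀ t, conj (u t) = -u t := fun t => by
    have hre : (f t).re = (g t).re := ContinuousMap.congr_fun hfg t
    exact Complex.ext (by simp [u, hre]) (by simp [u]; ring)
  have hu_neg : BandLimitedIn (-I) u := by
    simpa [hu_conj] using hu.star.const_mul (-1)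
  have hu_zero : u = 0 := (hu.empty_of_disjoint hI hI.neg.isClosed hdisj hu_neg
    (hf'.sub hg')).eq_zero_of_empty (f.continuous.sub g.continuous)
  exact ContinuousMap.ext fun t => sub_eq_zero.mp (congrFun hu_zero t)

theorem re_embedding_Bernstein_general (ε₀ c : ℝ) (hε₀ : 0 < ε₀) :
    Set.MapsTo Hre (BernsteinC (Icc ε₀ c)) (BernsteinR (Icc (-c) c)) ∧
    ContinuousOn Hre (BernsteinC (Icc ε₀ c)) ∧
    Set.InjOn Hre (BernsteinC (Icc ε₀ c)) ∧
    (∀ f : C(ℝ, ℂ), Hre (shiftC f) = shiftR (Hre f)) := by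
  have hsub : Icc ε₀ c ∪ -Icc ε₀ c ⊆ Icc (-c) c := by
    rw [neg_Icc]
    rintro x (hx | hx) <;> constructor <;> linarith [hx.1, hx.2]
  have hdisj : Disjoint (Icc ε₀ c) (-Icc ε₀ c) := by
    rw [neg_Icc, Set.disjoint_left]
    exact fun x hx hx' => by linarith [hx.1, hx'.2]
  refine ⟨fun f hf => ?_, continuous_Hre.continuousOn, injOn_Hre isCompact_Icc hdisj,
    fun _ => rfl⟩
  obtain ⟨hbound, hband⟩ := mapsTo_Hre _ hf
  exact ⟨hbound, hband.mono hsub⟩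

/-- For `0 < ε₀ < c`, the map `H : f ↦ (f + conj f)/2 = Re f` maps `𝓑^ℂ([ε₀, c])` into
`𝓑([-c, c])`, is continuous, injective on `𝓑^ℂ([ε₀, c])` and commutes with the shifts;
hence it is an equivariant topological embedding of `(𝓑^ℂ([ε₀, c]), σ)` into
`(𝓑([-c, c]), σ)`. -/
theorem re_embedding_Bernstein (ε₀ c : ℝ) (hε₀ : 0 < ε₀) (hc : ε₀ < c) :
    Set.MapsTo Hre (BernsteinC (Icc ε₀ c)) (BernsteinR (Icc (-c) c)) ∧
    ContinuousOn Hre (BernsteinC (Icc ε₀ c)) ∧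
    Set.InjOn Hre (BernsteinC (Icc ε₀ c)) ∧
    (∀ f : C(ℝ, ℂ), Hre (shiftC f) = shiftR (Hre f)) :=
  re_embedding_Bernstein_general ε₀ c hε₀

end
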